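/- Let D ∈ ℚ[c_{ia}] be nonzero, homogeneous of degree 4mn, and ω-isobaric of degree 2m²n. Suppose that under the corner specialization c̃ (keeping only coefficients indexed by (0,0),(m,0),(0,n),(m,n)), D(c̃) = ±Δ^{mn} where Δ is the irreducible 4×4 corner determinant, which is homogeneous of degree 4 and isobaric of degree 2m. If D = P·Q in ℚ[c_{ia}], then there exists an integer k with 0 ≤ k ≤ mn such that P is homogeneous of degree 4k and isobaric of degree 2mk, and Q is homogeneous of degree 4(mn−k) and isobaric of degree 2m(mn−k). -/

import Mathlib

/-!
Over a domain, the factors of a weighted-homogeneous polynomial are weighted homogeneous, so `P`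
and `Q` are homogeneous and `ω`-isobaric, with degrees adding up to those of `D`. The corner
specialization respects both gradings and makes `c̃(P)` a divisor of `± Δ^{mn}`; since `Δ` is
prime, `c̃(P)` is associated to some `Δ^k`, which pins down both degrees of `P`.
-/

open MvPolynomial

/-- Variables `c_{ia}` for `i = 1,…,4` and `a ∈ 𝒜 = {0,…,m} × {0,…,n}`. -/
abbrev MVar (m n : ℕ) : Type := Fin 4 × Fin (m + 1) × Fin (n + 1)

/-- The determinant `Δ` of the 4×4 matrix whose `i`-th row is
`(c_{i,(0,0)}, c_{i,(m,0)}, c_{i,(0,n)}, c_{i,(m,n)})`. -/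
noncomputable def cornerDet (m n : ℕ) : MvPolynomial (MVar m n) ℚ :=
  Matrix.det (Matrix.of fun (i j : Fin 4) =>
    X (i, ![((0 : Fin (m + 1)), (0 : Fin (n + 1))), (Fin.last m, 0), (0, Fin.last n),
            (Fin.last m, Fin.last n)] j))

/-- The corner specialization `c̃`: it keeps the variables `c_{ia}` with
`a ∈ {(0,0),(m,0),(0,n),(m,n)}` and sends all the other variables to `0`. -/
noncomputable def cornerSpec (m n : ℕ) :
    MvPolynomial (MVar m n) ℚ →ₐ[ℚ] MvPolynomial (MVar m n) ℚ :=
  aeval (fun v => if (v.2.1 = 0 ∨ v.2.1 = Fin.last m) ∧ (v.2.2 = 0 ∨ v.2.2 = Fin.last n)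
    then X v else 0)

open Matrix

namespace MvPolynomial

section WeightedFactors

variable {σ R : Type*} [CommRing R] (w : σ → ℕ)

noncomputable def gradedPoly : MvPolynomial σ R →ₐ[R] Polynomial (MvPolynomial σ R) :=
  aeval fun v => Polynomial.C (X v) * Polynomial.X ^ w v

theorem gradedPoly_monomial (d : σ →₀ ℕ) (c : R) :
    gradedPoly w (monomial d c) =
      Polynomial.C (monomial d c) * Polynomial.X ^ Finsupp.weight w d := by
  classical
  have hpow : ∀ v ∈ d.support,
      (Polynomial.C (X v : MvPolynomial σ R) * Polynomial.X ^ w v) ^ d v =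
        Polynomial.C (X v ^ d v) * Polynomial.X ^ (d v • w v) := fun v _ => by
    rw [mul_pow, ← Polynomial.C_pow, ← pow_mul, smul_eq_mul, mul_comm (d v)]
  rw [gradedPoly, aeval_monomial, Finsupp.weight_apply, Finsupp.prod, Finsupp.sum,
    Finset.prod_congr rfl hpow, Finset.prod_mul_distrib, ← map_prod,
    Finset.prod_pow_eq_pow_sum, monomial_eq, map_mul, ← mul_assoc, Finsupp.prod]
  simp [Polynomial.algebraMap_apply, MvPolynomial.algebraMap_eq]

theorem coeff_gradedPoly (f : MvPolynomial σ R) (k : ℕ) :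
    (gradedPoly w f).coeff k = weightedHomogeneousComponent w k f := by
  classical
  conv_lhs => rw [← support_sum_monomial_coeff f]
  rw [map_sum, Polynomial.finsetSum_coeff, weightedHomogeneousComponent_apply,
    Finset.sum_filter]
  refine Finset.sum_congr rfl fun d _ => ?_
  rw [gradedPoly_monomial, Polynomial.coeff_C_mul, Polynomial.coeff_X_pow]
  simp [eq_comm, mul_ite]

variable {w}

theorem coeff_gradedPoly_weight_ne_zero {f : MvPolynomial σ R} {d : σ →₀ ℕ}
    (hd : coeff d f ≠ 0) : (gradedPoly w f).coeff (Finsupp.weight w d) ≠ 0 := by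
  rw [coeff_gradedPoly]
  intro h
  apply hd
  simpa [coeff_weightedHomogeneousComponent] using congr_arg (coeff d) h

theorem gradedPoly_ne_zero {f : MvPolynomial σ R} (hf : f ≠ 0) : gradedPoly w f ≠ 0 := by
  obtain ⟨d, hd⟩ := exists_coeff_ne_zero hf
  exact fun h => coeff_gradedPoly_weight_ne_zero hd (by rw [h, Polynomial.coeff_zero])

theorem IsWeightedHomogeneous.gradedPoly_eq {f : MvPolynomial σ R} {n : ℕ}
    (hf : IsWeightedHomogeneous w f n) :
    gradedPoly w f = Polynomial.C f * Polynomial.X ^ n := by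
  ext1 k
  rw [coeff_gradedPoly, Polynomial.coeff_C_mul_X_pow]
  split_ifs with hk
  · exact hk ▸ hf.weightedHomogeneousComponent_same
  · exact hf.weightedHomogeneousComponent_ne k hk

theorem isWeightedHomogeneous_of_natTrailingDegree_gradedPoly {f : MvPolynomial σ R}
    (h : (gradedPoly w f).natTrailingDegree = (gradedPoly w f).natDegree) :
    IsWeightedHomogeneous w f (gradedPoly w f).natDegree := fun _ hd =>
  have hcoeff := coeff_gradedPoly_weight_ne_zero (w := w) hd
  le_antisymm (Polynomial.le_natDegree_of_ne_zero hcoeff)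
    (h ▸ Polynomial.natTrailingDegree_le_of_ne_zero hcoeff)

/-- Over a domain, `gradedPoly w (p * q) = C (p * q) * Tⁿ` is a monomial in `T`, so the factors
`gradedPoly w p` and `gradedPoly w q` are monomials in `T` as well. -/
theorem IsWeightedHomogeneous.of_mul [IsDomain R] {p q : MvPolynomial σ R} {n : ℕ}
    (h : IsWeightedHomogeneous w (p * q) n) (hp : p ≠ 0) (hq : q ≠ 0) :
    ∃ a b, a + b = n ∧ IsWeightedHomogeneous w p a ∧ IsWeightedHomogeneous w q b := by
  have hP := gradedPoly_ne_zero (w := w) hp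
  have hQ := gradedPoly_ne_zero (w := w) hq
  have hPQ : gradedPoly w p * gradedPoly w q = Polynomial.monomial n (p * q) := by
    rw [← map_mul, h.gradedPoly_eq, Polynomial.C_mul_X_pow_eq_monomial]
  have hdeg := Polynomial.natDegree_mul hP hQ
  have htrail := Polynomial.natTrailingDegree_mul hP hQ
  rw [hPQ, Polynomial.natDegree_monomial_eq _ (mul_ne_zero hp hq)] at hdeg
  rw [hPQ, Polynomial.natTrailingDegree_monomial (mul_ne_zero hp hq)] at htrail
  have hPle := Polynomial.natTrailingDegree_le_natDegree (gradedPoly w p)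
  have hQle := Polynomial.natTrailingDegree_le_natDegree (gradedPoly w q)
  exact ⟨_, _, hdeg.symm, isWeightedHomogeneous_of_natTrailingDegree_gradedPoly (by omega),
    isWeightedHomogeneous_of_natTrailingDegree_gradedPoly (by omega)⟩

end WeightedFactors

section Weights

variable {σ R : Type*}

theorem IsWeightedHomogeneous.aeval {τ S : Type*} [CommSemiring R] [CommSemiring S]
    [Algebra R S] {w : σ → ℕ} {w' : τ → ℕ} {p : MvPolynomial σ R} {n : ℕ}
    (hp : IsWeightedHomogeneous w p n) (g : σ → MvPolynomial τ S)
    (hg : ∀ v, IsWeightedHomogeneous w' (g v) (w v)) :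
    IsWeightedHomogeneous w' (aeval g p) n := by
  conv_lhs => rw [p.as_sum]
  rw [map_sum]
  refine IsWeightedHomogeneous.sum _ _ _ fun d hd => ?_
  rw [aeval_monomial, ← hp (mem_support_iff.mp hd), ← zero_add (Finsupp.weight w d),
    Finsupp.weight_apply, Finsupp.sum, algebraMap_apply]
  exact (isWeightedHomogeneous_C w' _).mul
    (IsWeightedHomogeneous.prod _ _ _ fun v _ => (hg v).pow (d v))

theorem IsWeightedHomogeneous.eq_of_associated {M : Type*} [AddCommMonoid M] [CommRing R]
    [IsReduced R] {w : σ → M} {p q : MvPolynomial σ R} {a b : M} (h : Associated p q)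
    (hq : q ≠ 0) (hpa : IsWeightedHomogeneous w p a) (hqb : IsWeightedHomogeneous w q b) :
    a = b := by
  obtain ⟨u, rfl⟩ := h
  obtain ⟨r, -, hr⟩ := isUnit_iff_eq_C_of_isReduced.mp u.isUnit
  have hqa := hpa.mul (isWeightedHomogeneous_C w r)
  rw [← hr, add_zero] at hqa
  exact hqa.inj_right hq hqb

theorem IsWeightedHomogeneous.notMem_vars [CommSemiring R] {w : σ → ℕ}
    {p : MvPolynomial σ R} (hp : IsWeightedHomogeneous w p 0) {v : σ} (hv : w v ≠ 0) :
    v ∉ p.vars := by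
  rw [mem_vars_iff_mem_support]
  rintro ⟨d, hd, hvd⟩
  have := Finsupp.le_weight w hv d
  rw [hp (mem_support_iff.mp hd)] at this
  exact Finsupp.mem_support_iff.mp hvd (Nat.le_zero.mp this)

theorem isUnit_iff_vars_eq_empty {K : Type*} [Field K] {p : MvPolynomial σ K} (hp : p ≠ 0) :
    IsUnit p ↔ p.vars = ∅ := by
  rw [vars_eq_empty_iff_eq_C, isUnit_iff_eq_C_of_isReduced]
  constructor
  · rintro ⟨r, -, rfl⟩
    rw [coeff_zero_C]
  · intro h
    refine ⟨_, isUnit_iff_ne_zero.mpr fun h0 => hp ?_, h⟩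
    rw [h, h0, map_zero]

theorem IsWeightedHomogeneous.right_of_mul_of_mem_vars [CommRing R] [IsDomain R] {w : σ → ℕ}
    {p q : MvPolynomial σ R} (h : IsWeightedHomogeneous w (p * q) 1)
    (hp : p ≠ 0) (hq : q ≠ 0) {v : σ} (hv : v ∈ p.vars) (hwv : w v ≠ 0) :
    IsWeightedHomogeneous w q 0 := by
  obtain ⟨a, b, hab, ha, hb⟩ := h.of_mul hp hq
  obtain rfl | rfl : b = 0 ∨ a = 0 := by omega
  · exact hb
  · exact absurd hv (ha.notMem_vars hwv)

end Weights

section DetSubmatrixMvPolynomialX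

variable {ι τ R : Type*} [Fintype ι] [DecidableEq ι] [CommRing R]

theorem isWeightedHomogeneous_det_submatrix_mvPolynomialX (c : ι → τ) (w : ι × τ → ℕ)
    (n : ℕ) (h : ∀ σ : Equiv.Perm ι, ∑ i, w (σ i, c i) = n) :
    IsWeightedHomogeneous w ((mvPolynomialX ι τ R).submatrix id c).det n := by
  rw [det_apply']
  refine IsWeightedHomogeneous.sum _ _ _ fun σ _ => ?_
  rw [← h σ, ← zero_add (∑ i, _), ← map_intCast (C : R →+* MvPolynomial (ι × τ) R)]
  exact (isWeightedHomogeneous_C w _).mul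
    (IsWeightedHomogeneous.prod _ _ _ fun i _ => isWeightedHomogeneous_X R w (σ i, c i))

/-- Evaluating at the permutation matrix of `swap r j` gives `± 1`, while zeroing the entry at
`(r, c j)` as well kills column `j`; so the value depends on that variable. -/
theorem mem_vars_det_submatrix_mvPolynomialX [Nontrivial R] {c : ι → τ}
    (hc : Function.Injective c) (r j : ι) :
    (r, c j) ∈ ((mvPolynomialX ι τ R).submatrix id c).det.vars := by
  classical
  have : Nonempty ι := ⟨r⟩
  set Δ := ((mvPolynomialX ι τ R).submatrix id c).det
  set σ := Equiv.swap r j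
  set x : ι × τ → R := fun v => σ.permMatrix R v.1 (Function.invFun c v.2)
  set x' := Function.update x (r, c j) 0
  have hx : ∀ i k, x (i, c k) = σ.permMatrix R i k := fun i k => by
    simp only [x, Function.leftInverse_invFun hc k]
  have hperm : eval x Δ = Equiv.Perm.sign σ := by
    rw [RingHom.map_det, ← det_permutation σ]
    congr 1
    ext i k
    simp [hx]
  have hzero : eval x' Δ = 0 := by
    rw [RingHom.map_det]
    refine det_eq_zero_of_column_eq_zero j fun i => ?_
    simp only [RingHom.mapMatrix_apply, map_apply, submatrix_apply, id, mvPolynomialX_apply,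
      eval_X, x']
    by_cases hi : i = r
    · simp [hi]
    · have : σ i ≠ j := fun h => hi (σ.injective (h.trans (Equiv.swap_apply_left r j).symm))
      rw [Function.update_of_ne (by simp [hi]), hx]
      simp [this]
  by_contra hr
  have hsame : eval x Δ = eval x' Δ := hom_congr_vars (by ext; simp)
    (fun v hv _ => by simp [x', Function.update_of_ne (fun h : v = (r, c j) => hr (h ▸ hv))]) rfl
  rw [hperm, hzero] at hsame
  rcases Int.units_eq_one_or (Equiv.Perm.sign σ) with h | h <;> simp [h] at hsame

theorem isWeightedHomogeneous_det_submatrix_mvPolynomialX_row (c : ι → τ) (r : ι) :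
    IsWeightedHomogeneous (fun v : ι × τ => if v.1 = r then 1 else 0)
      ((mvPolynomialX ι τ R).submatrix id c).det 1 :=
  isWeightedHomogeneous_det_submatrix_mvPolynomialX c _ 1 fun σ => by
    dsimp only
    rw [Equiv.sum_comp σ (fun i => if i = r then 1 else 0)]
    simp

theorem isWeightedHomogeneous_det_submatrix_mvPolynomialX_col [DecidableEq τ] {c : ι → τ}
    (hc : Function.Injective c) (j : ι) :
    IsWeightedHomogeneous (fun v : ι × τ => if v.2 = c j then 1 else 0)
      ((mvPolynomialX ι τ R).submatrix id c).det 1 :=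
  isWeightedHomogeneous_det_submatrix_mvPolynomialX c _ 1 fun σ => by simp [hc.eq_iff]

theorem isWeightedHomogeneous_det_submatrix_mvPolynomialX_notMemRange [DecidableEq τ]
    (c : ι → τ) :
    IsWeightedHomogeneous (fun v : ι × τ => if ∃ j, v.2 = c j then 0 else 1)
      ((mvPolynomialX ι τ R).submatrix id c).det 0 :=
  isWeightedHomogeneous_det_submatrix_mvPolynomialX c _ 0 fun σ => by simp

variable {K : Type*} [Field K]

/-- If `Δ = F * G` with `F` involving a variable in row `a` and `G` one in column `j`, then the
row-`a` degree of `G` and the column-`j` degree of `F` vanish, so neither factor involves the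
variable `(a, c j)` of `Δ`. -/
theorem irreducible_det_submatrix_mvPolynomialX [Nonempty ι] {c : ι → τ}
    (hc : Function.Injective c) :
    Irreducible ((mvPolynomialX ι τ K).submatrix id c).det := by
  classical
  have hvars := mem_vars_det_submatrix_mvPolynomialX (R := K) hc
  have hrow := isWeightedHomogeneous_det_submatrix_mvPolynomialX_row (R := K) c
  have hcol := isWeightedHomogeneous_det_submatrix_mvPolynomialX_col (R := K) hc
  have hoff := isWeightedHomogeneous_det_submatrix_mvPolynomialX_notMemRange (R := K) c
  set Δ := ((mvPolynomialX ι τ K).submatrix id c).det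
  obtain ⟨i₀⟩ := ‹Nonempty ι›
  have hΔ0 : Δ ≠ 0 := fun h => by simpa [h] using hvars i₀ i₀
  refine ⟨fun hu => by simpa [(isUnit_iff_vars_eq_empty hΔ0).mp hu] using hvars i₀ i₀,
    fun F G hFG => ?_⟩
  by_contra! ⟨hFu, hGu⟩
  have hF0 : F ≠ 0 := by rintro rfl; exact hΔ0 (by rw [hFG, zero_mul])
  have hG0 : G ≠ 0 := by rintro rfl; exact hΔ0 (by rw [hFG, mul_zero])
  obtain ⟨⟨a, t⟩, haF⟩ :=
    Finset.nonempty_iff_ne_empty.mpr ((isUnit_iff_vars_eq_empty hF0).not.mp hFu)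
  obtain ⟨⟨a', t'⟩, haG⟩ :=
    Finset.nonempty_iff_ne_empty.mpr ((isUnit_iff_vars_eq_empty hG0).not.mp hGu)
  rw [hFG] at hvars hrow hcol hoff
  have hGrow := (hrow a).right_of_mul_of_mem_vars hF0 hG0 haF (by simp)
  obtain ⟨j, rfl⟩ : ∃ j, t' = c j := by
    obtain ⟨oF, oG, ho, -, hGo⟩ := hoff.of_mul hF0 hG0
    by_contra ht
    exact (Nat.eq_zero_of_add_eq_zero_left ho ▸ hGo).notMem_vars (by simpa using ht) haG
  have hFcol := (mul_comm F G ▸ hcol j).right_of_mul_of_mem_vars hG0 hF0 haG (by simp)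
  rcases Finset.mem_union.mp (vars_mul F G (hvars a j)) with h | h
  · exact hFcol.notMem_vars (by simp) h
  · exact hGrow.notMem_vars (by simp) h

end DetSubmatrixMvPolynomialX

end MvPolynomial

section Corner

variable {m n : ℕ}

def corner (m n : ℕ) : Fin 4 → Fin (m + 1) × Fin (n + 1) :=
  ![(0, 0), (Fin.last m, 0), (0, Fin.last n), (Fin.last m, Fin.last n)]

theorem corner_injective (hm : 0 < m) (hn : 0 < n) : Function.Injective (corner m n) := by
  have hm' : (0 : Fin (m + 1)) ≠ Fin.last m := Fin.ext_iff.not.mpr (by simpa using hm.ne)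
  have hn' : (0 : Fin (n + 1)) ≠ Fin.last n := Fin.ext_iff.not.mpr (by simpa using hn.ne)
  intro a b hab
  fin_cases a <;> fin_cases b <;> simp_all [corner, Prod.ext_iff, eq_comm]

theorem irreducible_cornerDet (hm : 0 < m) (hn : 0 < n) : Irreducible (cornerDet m n) :=
  irreducible_det_submatrix_mvPolynomialX (corner_injective hm hn)

theorem isHomogeneous_cornerDet : (cornerDet m n).IsHomogeneous 4 :=
  isWeightedHomogeneous_det_submatrix_mvPolynomialX (corner m n) 1 4 fun σ => by simp

theorem isWeightedHomogeneous_cornerDet :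
    IsWeightedHomogeneous (fun v : MVar m n => (v.2.1 : ℕ)) (cornerDet m n) (2 * m) :=
  isWeightedHomogeneous_det_submatrix_mvPolynomialX (corner m n) _ _ fun σ => by
    simp [corner, Fin.sum_univ_four, two_mul]

theorem isWeightedHomogeneous_cornerSpec {w : MVar m n → ℕ} {p : MvPolynomial (MVar m n) ℚ}
    {k : ℕ} (hp : IsWeightedHomogeneous w p k) : IsWeightedHomogeneous w (cornerSpec m n p) k :=
  hp.aeval _ fun v => by
    split_ifs
    · exact isWeightedHomogeneous_X ℚ w v
    · exact isWeightedHomogeneous_zero ℚ w (w v)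

end Corner

/-- if `D ≠ 0` is homogeneous of degree `4mn`, ω-isobaric of degree
`2m²n` (weight `ω(c_{ia}) = a₁`), its corner specialization equals `± Δ^{mn}`, and
`D = P·Q`, then there is `k` with `0 ≤ k ≤ mn` such that `P` is homogeneous of
degree `4k` and isobaric of degree `2mk`, and `Q` is homogeneous of degree
`4(mn−k)` and isobaric of degree `2m(mn−k)`. -/
theorem factor_degrees_of_corner_spec (m n : ℕ) (hm : 1 ≤ m) (hn : 1 ≤ n)
    (D P Q : MvPolynomial (MVar m n) ℚ)
    (hD0 : D ≠ 0)
    (hhom : D.IsHomogeneous (4 * m * n))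
    (hiso : IsWeightedHomogeneous (fun v : MVar m n => (v.2.1 : ℕ)) D (2 * m ^ 2 * n))
    (hspec : cornerSpec m n D = cornerDet m n ^ (m * n) ∨
             cornerSpec m n D = -(cornerDet m n ^ (m * n)))
    (hfac : D = P * Q) :
    ∃ k : ℕ, k ≤ m * n ∧
      P.IsHomogeneous (4 * k) ∧
      IsWeightedHomogeneous (fun v : MVar m n => (v.2.1 : ℕ)) P (2 * m * k) ∧
      Q.IsHomogeneous (4 * (m * n - k)) ∧
      IsWeightedHomogeneous (fun v : MVar m n => (v.2.1 : ℕ)) Q (2 * m * (m * n - k)) := by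
  have hP0 : P ≠ 0 := by rintro rfl; exact hD0 (by rw [hfac, zero_mul])
  have hQ0 : Q ≠ 0 := by rintro rfl; exact hD0 (by rw [hfac, mul_zero])
  obtain ⟨dP, dQ, hd, hPd, hQd⟩ := IsWeightedHomogeneous.of_mul (hfac ▸ hhom) hP0 hQ0
  obtain ⟨wP, wQ, hw, hPw, hQw⟩ := (hfac ▸ hiso).of_mul hP0 hQ0
  have hdvd : cornerSpec m n P ∣ cornerDet m n ^ (m * n) := by
    have hPD : cornerSpec m n P ∣ cornerSpec m n D := map_dvd _ (hfac ▸ dvd_mul_right P Q)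
    rcases hspec with h | h <;> simpa [h] using hPD
  have hΔ := irreducible_cornerDet hm hn
  obtain ⟨k, hk, hassoc⟩ := (dvd_prime_pow hΔ.prime _).mp hdvd
  have hΔk : cornerDet m n ^ k ≠ 0 := pow_ne_zero _ hΔ.ne_zero
  have hdP : dP = 4 * k := IsWeightedHomogeneous.eq_of_associated hassoc hΔk
    (isWeightedHomogeneous_cornerSpec hPd) (isHomogeneous_cornerDet.pow k)
  have hwP : wP = 2 * m * k := (IsWeightedHomogeneous.eq_of_associated hassoc hΔk
    (isWeightedHomogeneous_cornerSpec hPw) (isWeightedHomogeneous_cornerDet.pow k)).trans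
    (by rw [smul_eq_mul, mul_comm])
  have hdQ : dQ = 4 * (m * n - k) := by
    rw [mul_assoc] at hd
    omega
  have hwQ : wQ = 2 * m * (m * n - k) := by
    rw [show 2 * m ^ 2 * n = 2 * m * (m * n) by ring] at hw
    rw [Nat.mul_sub]
    omega
  exact ⟨k, hk, hdP ▸ hPd, hwP ▸ hPw, hdQ ▸ hQd, hwQ ▸ hQw⟩
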